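/- arXiv:math/9803099 — 2 statements merged into one kernel-verified Lean document; each statement's English description precedes it below -/
import Mathlib

section
/- For every integer p ≥ 1 one has α_{2p−1;2p} = [2p]!!·Ψ_p(q) and α_{2p−1;2p−1} = [2p−1]!!. -/
open Polynomial Filter

/-- The symmetric q-number `[n] = (q^n - q^{-n})/(q - q⁻¹)`. -/
noncomputable def qnum (q : ℝ) (n : ℕ) : ℝ := (q ^ (n : ℤ) - q ^ (-(n : ℤ))) / (q - q⁻¹)

/-- The q-factorial `[n]! = [1][2]⋯[n]`. -/
noncomputable def qfact (q : ℝ) : ℕ → ℝ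
  | 0 => 1
  | n + 1 => qfact q n * qnum q (n + 1)

/-- The even q-double factorial: `evenDF q n = [2n]!! = [2n][2n-2]⋯[2]`. -/
noncomputable def evenDF (q : ℝ) : ℕ → ℝ
  | 0 => 1
  | n + 1 => qnum q (2 * (n + 1)) * evenDF q n

/-- The odd q-double factorial: `oddDF q n = [2n-1]!! = [2n-1][2n-3]⋯[1]`. -/
noncomputable def oddDF (q : ℝ) : ℕ → ℝ
  | 0 => 1
  | n + 1 => qnum q (2 * n + 1) * oddDF q n

/-- `alphaC q m n = α_{2m-1;n}`, with `α_{-1;n} = 1` and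
`α_{2m-1;n} = Σ_{k=2m-1}^{n} [k]·α_{2m-3;k-2}`. -/
noncomputable def alphaC (q : ℝ) : ℕ → ℕ → ℝ
  | 0, _ => 1
  | m + 1, n => ∑ k ∈ Finset.Icc (2 * m + 1) n, qnum q k * alphaC q m (k - 2)

/-- `betaC q m n = β_{2m;n}`, with `β_{0;n} = 1` and
`β_{2m;n} = Σ_{k=2m}^{n} [k]·β_{2m-2;k-2}`. -/
noncomputable def betaC (q : ℝ) : ℕ → ℕ → ℝ
  | 0, _ => 1
  | m + 1, n => ∑ k ∈ Finset.Icc (2 * m + 2) n, qnum q k * betaC q m (k - 2)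

lemma qnum_ne_zero (q : ℝ) (hq : 0 < q) (hq1 : q ≠ 1) (n : ℕ) (hn : 1 ≤ n) :
    qnum q n ≠ 0 := by
  have hlt : -(n : ℤ) < (n : ℤ) := by omega
  rcases lt_or_gt_of_ne hq1 with h | h
  · have hnum : q ^ (n : ℤ) < q ^ (-(n : ℤ)) := zpow_lt_zpow_right_of_lt_one₀ hq h hlt
    have hden : q < q⁻¹ := by
      rw [lt_inv_comm₀ hq hq]; calc q < 1 := h
                                    _ ≤ q⁻¹ := (one_le_inv₀ hq).mpr h.le
    unfold qnum
    exact div_ne_zero (by linarith) (by linarith)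
  · have hnum : q ^ (-(n : ℤ)) < q ^ (n : ℤ) := zpow_lt_zpow_right₀ h hlt
    have hden : q⁻¹ < q := by
      have := (inv_lt_one₀ hq).mpr h
      linarith
    unfold qnum
    exact div_ne_zero (by linarith) (by linarith)

lemma qnum_one (q : ℝ) (hq : 0 < q) (hq1 : q ≠ 1) : qnum q 1 = 1 := by
  have hden : q - q⁻¹ ≠ 0 := by
    have := qnum_ne_zero q hq hq1 1 le_rfl
    intro h
    exact this (by unfold qnum; rw [h, div_zero])
  unfold qnum
  rw [show ((1:ℕ):ℤ) = 1 by norm_num]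
  rw [zpow_one, zpow_neg_one]
  exact div_self hden

lemma evenDF_ne_zero (q : ℝ) (hq : 0 < q) (hq1 : q ≠ 1) (n : ℕ) : evenDF q n ≠ 0 := by
  induction n with
  | zero => simp [evenDF]
  | succ n ih =>
    unfold evenDF
    exact mul_ne_zero (qnum_ne_zero q hq hq1 _ (by omega)) ih

/-- For every `p ≥ 1`, `α_{2p-1;2p} = [2p]!!·Ψ_p(q)` and
`α_{2p-1;2p-1} = [2p-1]!!`. -/
theorem stmt11 (q : ℝ) (hq : 0 < q) (hq1 : q ≠ 1) (p : ℕ) (hp : 1 ≤ p) :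
    (alphaC q p (2 * p) = evenDF q p * (1 + ∑ k ∈ Finset.Icc 1 p, oddDF q k / evenDF q k)) ∧
    (alphaC q p (2 * p - 1) = oddDF q p) := by
  induction p, hp using Nat.le_induction with
  | base =>
    have h2 : evenDF q 1 ≠ 0 := evenDF_ne_zero q hq hq1 1
    constructor
    · show alphaC q 1 2 = _
      have : alphaC q 1 2 = qnum q 1 * alphaC q 0 0 + qnum q 2 * alphaC q 0 0 := by
        show (∑ k ∈ Finset.Icc (2 * 0 + 1) 2, qnum q k * alphaC q 0 (k - 2)) = _
        rw [show (2:ℕ) = 1 + 1 by rfl, Finset.sum_Icc_succ_top (by omega), Finset.Icc_self,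
            Finset.sum_singleton]
      rw [this]
      simp only [alphaC, evenDF, oddDF, Finset.Icc_self, Finset.sum_singleton,
        qnum_one q hq hq1]
      have h2' : qnum q 2 ≠ 0 := qnum_ne_zero q hq hq1 2 (by omega)
      field_simp
      ring
    · show alphaC q 1 1 = _
      show (∑ k ∈ Finset.Icc (2 * 0 + 1) 1, qnum q k * alphaC q 0 (k - 2)) = _
      simp [alphaC, oddDF, Finset.Icc_self]
  | succ p hp ih =>
    obtain ⟨ih1, ih2⟩ := ih
    have key1 : alphaC q (p + 1) (2 * p + 1) = qnum q (2 * p + 1) * alphaC q p (2 * p - 1) := by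
      show (∑ k ∈ Finset.Icc (2 * p + 1) (2 * p + 1), qnum q k * alphaC q p (k - 2)) = _
      rw [Finset.Icc_self, Finset.sum_singleton]
      congr 1
    have key2 : alphaC q (p + 1) (2 * (p + 1)) =
        alphaC q (p + 1) (2 * p + 1) + qnum q (2 * p + 2) * alphaC q p (2 * p) := by
      show (∑ k ∈ Finset.Icc (2 * p + 1) (2 * (p + 1)), qnum q k * alphaC q p (k - 2)) = _
      rw [show 2 * (p + 1) = (2 * p + 1) + 1 by ring, Finset.sum_Icc_succ_top (by omega)]
      congr 1
    constructor
    · rw [key2, key1, ih1, ih2]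
      have hsum : (∑ k ∈ Finset.Icc 1 (p + 1), oddDF q k / evenDF q k) =
          (∑ k ∈ Finset.Icc 1 p, oddDF q k / evenDF q k) + oddDF q (p+1) / evenDF q (p+1) :=
        Finset.sum_Icc_succ_top (by omega) _
      rw [hsum]
      have hE : evenDF q (p+1) = qnum q (2 * (p+1)) * evenDF q p := rfl
      have hO : oddDF q (p+1) = qnum q (2 * p + 1) * oddDF q p := rfl
      have hq2 : qnum q (2 * p + 2) ≠ 0 := qnum_ne_zero q hq hq1 _ (by omega)
      have hEp : evenDF q p ≠ 0 := evenDF_ne_zero q hq hq1 p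
      rw [show 2 * (p + 1) = 2 * p + 2 from by ring] at hE
      rw [hE, hO]
      field_simp
      ring
    · rw [show 2 * (p + 1) - 1 = 2 * p + 1 by omega, key1, ih2]
      rfl
end

section
/- For every integer p ≥ 1 the following two partial-sum identities hold: (1/[2p−1]!!)·Σ_{m=0}^{p} α_{2m−1;2p−1} = 1 + Σ_{k=1}^{p} (1/[2k−1]!!)·Σ_{m=0}^{k−1} α_{2m−1;2k−2}, and (1/[2p]!!)·Σ_{m=0}^{p} α_{2m−1;2p} = Ψ_p(q) + Σ_{k=1}^{p} (1/[2k]!!)·Σ_{m=0}^{k−1} α_{2m−1;2k−1}. -/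
open Polynomial Filter

lemma qnum_pos (q : ℝ) (hq : 0 < q) (hq1 : q ≠ 1) {n : ℕ} (hn : 1 ≤ n) : 0 < qnum q n := by
  have hlt : -(n : ℤ) < (n : ℤ) := by omega
  unfold qnum
  rcases lt_or_gt_of_ne hq1 with h | h
  · have h1 : q ^ (n : ℤ) < q ^ (-(n : ℤ)) := zpow_lt_zpow_right_of_lt_one₀ hq h hlt
    have h2 : q < q⁻¹ := lt_trans h ((one_lt_inv₀ hq).2 h)
    exact div_pos_of_neg_of_neg (by linarith) (by linarith)
  · have h1 : q ^ (-(n : ℤ)) < q ^ (n : ℤ) := zpow_lt_zpow_right₀ h hlt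
    have h2 : q⁻¹ < q := lt_trans (inv_lt_one_of_one_lt₀ h) h
    exact div_pos (by linarith) (by linarith)

lemma oddDF_pos (q : ℝ) (hq : 0 < q) (hq1 : q ≠ 1) (p : ℕ) : 0 < oddDF q p := by
  induction p with
  | zero => norm_num [oddDF]
  | succ n ih => exact mul_pos (qnum_pos q hq hq1 (by omega)) ih

lemma evenDF_pos (q : ℝ) (hq : 0 < q) (hq1 : q ≠ 1) (p : ℕ) : 0 < evenDF q p := by
  induction p with
  | zero => norm_num [evenDF]
  | succ n ih => exact mul_pos (qnum_pos q hq hq1 (by omega)) ih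

lemma alphaC_zero_of_le (q : ℝ) (m n : ℕ) (h : n ≤ 2 * m) : alphaC q (m + 1) n = 0 := by
  rw [alphaC, Finset.Icc_eq_empty (by omega), Finset.sum_empty]

lemma alphaC_diag (q : ℝ) (p : ℕ) : alphaC q p (2 * p - 1) = oddDF q p := by
  induction p with
  | zero => simp [alphaC, oddDF]
  | succ n ih =>
    have h : 2 * (n + 1) - 1 = 2 * n + 1 := by omega
    rw [h, alphaC, show Finset.Icc (2 * n + 1) (2 * n + 1) = {2 * n + 1} from Finset.Icc_self _,
      Finset.sum_singleton, show 2 * n + 1 - 2 = 2 * n - 1 by omega, ih, oddDF]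

lemma alphaC_step (q : ℝ) (m n : ℕ) (hn : 1 ≤ n) :
    alphaC q (m + 1) n = alphaC q (m + 1) (n - 1) + qnum q n * alphaC q m (n - 2) := by
  obtain ⟨n', rfl⟩ : ∃ n', n = n' + 1 := ⟨n - 1, by omega⟩
  rcases le_or_gt (2 * m + 1) (n' + 1) with h | h
  · rw [alphaC, Finset.sum_Icc_succ_top h]
    simp only [Nat.add_sub_cancel]
    rcases Nat.eq_or_lt_of_le h with h' | h'
    · rw [← h', Finset.Icc_eq_empty (by omega), Finset.sum_empty,
        show alphaC q (m + 1) n' = 0 from alphaC_zero_of_le q m n' (by omega)]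
    · rw [show alphaC q (m + 1) n' = ∑ k ∈ Finset.Icc (2*m+1) n', qnum q k * alphaC q m (k-2)
        from rfl]
  · -- n' + 1 < 2m + 1, so n' + 1 ≤ 2m; also m ≥ 1 since n' + 1 ≥ 1
    obtain ⟨m', rfl⟩ : ∃ m', m = m' + 1 := ⟨m - 1, by omega⟩
    rw [alphaC_zero_of_le q _ _ (by omega), alphaC_zero_of_le q _ _ (by omega),
      alphaC_zero_of_le q _ _ (by omega)]
    ring

lemma sum_alpha_step (q : ℝ) (p n : ℕ) (hn : 1 ≤ n) :
    ∑ m ∈ Finset.range (p + 1), alphaC q m n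
      = ∑ m ∈ Finset.range (p + 1), alphaC q m (n - 1)
        + qnum q n * ∑ m ∈ Finset.range p, alphaC q m (n - 2) := by
  rw [Finset.sum_range_succ', Finset.sum_range_succ' (fun m => alphaC q m (n - 1)),
    Finset.mul_sum]
  have : ∀ m ∈ Finset.range p, alphaC q (m + 1) n
      = alphaC q (m + 1) (n - 1) + qnum q n * alphaC q m (n - 2) :=
    fun m _ => alphaC_step q m n hn
  rw [Finset.sum_congr rfl this, Finset.sum_add_distrib]
  simp [alphaC]
  ring

lemma key (q : ℝ) (hq : 0 < q) (hq1 : q ≠ 1) (p : ℕ) :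
    ((oddDF q p)⁻¹ * ∑ m ∈ Finset.range (p + 1), alphaC q m (2 * p - 1)
      = 1 + ∑ k ∈ Finset.Icc 1 p, (oddDF q k)⁻¹ * ∑ m ∈ Finset.range k, alphaC q m (2 * k - 2)) ∧
    ((evenDF q p)⁻¹ * ∑ m ∈ Finset.range (p + 1), alphaC q m (2 * p)
      = (1 + ∑ j ∈ Finset.Icc 1 p, oddDF q j / evenDF q j)
        + ∑ k ∈ Finset.Icc 1 p, (evenDF q k)⁻¹ * ∑ m ∈ Finset.range k, alphaC q m (2 * k - 1)) := by
  induction p with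
  | zero => norm_num [oddDF, evenDF, alphaC]
  | succ p IH =>
    have hqn1 : qnum q (2 * p + 1) ≠ 0 := (qnum_pos q hq hq1 (by omega)).ne'
    have hqn2 : qnum q (2 * p + 2) ≠ 0 := (qnum_pos q hq hq1 (by omega)).ne'
    have hod : oddDF q p ≠ 0 := (oddDF_pos q hq hq1 p).ne'
    have hev : evenDF q p ≠ 0 := (evenDF_pos q hq hq1 p).ne'
    have hodS : oddDF q (p + 1) = qnum q (2 * p + 1) * oddDF q p := rfl
    have hevS : evenDF q (p + 1) = qnum q (2 * p + 2) * evenDF q p := by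
      rw [evenDF, show 2 * (p + 1) = 2 * p + 2 by ring]
    constructor
    · rw [show 2 * (p + 1) - 1 = 2 * p + 1 by omega,
        sum_alpha_step q (p + 1) (2 * p + 1) (by omega),
        show 2 * p + 1 - 1 = 2 * p by omega, show 2 * p + 1 - 2 = 2 * p - 1 by omega,
        Finset.sum_range_succ (fun m => alphaC q m (2 * p)) (p + 1),
        alphaC_zero_of_le q p (2 * p) (by omega),
        Finset.sum_Icc_succ_top (show 1 ≤ p + 1 by omega),
        show 2 * (p + 1) - 2 = 2 * p by omega, hodS]
      have h1 := IH.1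
      field_simp at h1 ⊢
      linear_combination qnum q (2 * p + 1) * h1
    · rw [show 2 * (p + 1) = 2 * p + 2 by omega,
        sum_alpha_step q (p + 1) (2 * p + 2) (by omega),
        show 2 * p + 2 - 1 = 2 * p + 1 by omega, show 2 * p + 2 - 2 = 2 * p by omega,
        Finset.sum_range_succ (fun m => alphaC q m (2 * p + 1)) (p + 1),
        show alphaC q (p + 1) (2 * p + 1) = oddDF q (p + 1) by
          have := alphaC_diag q (p + 1); rwa [show 2 * (p + 1) - 1 = 2 * p + 1 by omega] at this,
        Finset.sum_Icc_succ_top (show 1 ≤ p + 1 by omega),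
        Finset.sum_Icc_succ_top (show 1 ≤ p + 1 by omega),
        show 2 * (p + 1) - 1 = 2 * p + 1 by omega, hodS, hevS]
      have h2 := IH.2
      field_simp at h2 ⊢
      linear_combination qnum q (2 * p + 2) * h2

/-- For every `p ≥ 1`:
`(1/[2p-1]!!)·Σ_{m=0}^{p} α_{2m-1;2p-1} = 1 + Σ_{k=1}^{p} (1/[2k-1]!!)·Σ_{m=0}^{k-1} α_{2m-1;2k-2}`
and
`(1/[2p]!!)·Σ_{m=0}^{p} α_{2m-1;2p} = Ψ_p(q) + Σ_{k=1}^{p} (1/[2k]!!)·Σ_{m=0}^{k-1} α_{2m-1;2k-1}`. -/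
theorem stmt14 (q : ℝ) (hq : 0 < q) (hq1 : q ≠ 1) (p : ℕ) (hp : 1 ≤ p) :
    ((oddDF q p)⁻¹ * ∑ m ∈ Finset.range (p + 1), alphaC q m (2 * p - 1)
      = 1 + ∑ k ∈ Finset.Icc 1 p, (oddDF q k)⁻¹ * ∑ m ∈ Finset.range k, alphaC q m (2 * k - 2)) ∧
    ((evenDF q p)⁻¹ * ∑ m ∈ Finset.range (p + 1), alphaC q m (2 * p)
      = (1 + ∑ j ∈ Finset.Icc 1 p, oddDF q j / evenDF q j)
        + ∑ k ∈ Finset.Icc 1 p, (evenDF q k)⁻¹ * ∑ m ∈ Finset.range k, alphaC q m (2 * k - 1)) :=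
  key q hq hq1 p
end
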